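/- For every n ≥ 1, the second nilpotent product (Z/nZ) *₂ (Z/nZ) is isomorphic to the Heisenberg group of upper unitriangular 3×3 matrices over Z/nZ. -/

import Mathlib

open Monoid
open scoped commutatorElement

/-- The normal subgroup of the free product `A ∗ B` generated by commutators
`⁅x, ⁅a, b⁆⁆` with `x ∈ A ∗ B`, `a ∈ A`, `b ∈ B`. -/
def nil2Rel (A B : Type*) [Group A] [Group B] : Subgroup (Coprod A B) :=
  Subgroup.normalClosure
    {z | ∃ (x : Coprod A B) (a : A) (b : B), z = ⁅x, ⁅(Coprod.inl a : Coprod A B), Coprod.inr b⁆⁆}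

instance (A B : Type*) [Group A] [Group B] : (nil2Rel A B).Normal :=
  Subgroup.normalClosure_normal

/-- The second nilpotent product `A *₂ B = (A ∗ B)/[A ∗ B, [A,B]]`. -/
def Nil2 (A B : Type*) [Group A] [Group B] : Type _ :=
  Coprod A B ⧸ nil2Rel A B

instance (A B : Type*) [Group A] [Group B] : Group (Nil2 A B) :=
  QuotientGroup.Quotient.group _

/-- Canonical map `A → A *₂ B`. -/
def Nil2.inl {A B : Type*} [Group A] [Group B] : A →* Nil2 A B :=
  (QuotientGroup.mk' (nil2Rel A B)).comp Coprod.inl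

/-- Canonical map `B → A *₂ B`. -/
def Nil2.inr {A B : Type*} [Group A] [Group B] : B →* Nil2 A B :=
  (QuotientGroup.mk' (nil2Rel A B)).comp Coprod.inr

/-- The subgroup `[A,B]⁽²⁾` of `A *₂ B` generated by the commutators `⁅a, b⁆`. -/
def commSubgroup (A B : Type*) [Group A] [Group B] : Subgroup (Nil2 A B) :=
  Subgroup.closure {z | ∃ (a : A) (b : B), z = ⁅(Nil2.inl a : Nil2 A B), Nil2.inr b⁆}

/-- The Heisenberg group of upper unitriangular `3 × 3` matrices over `R`, as a subgroup
of the units of the matrix ring. -/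
def Heis (R : Type*) [CommRing R] : Subgroup (Matrix (Fin 3) (Fin 3) R)ˣ where
  carrier := {M | ∃ a b c : R, (M : Matrix (Fin 3) (Fin 3) R) = !![1, a, c; 0, 1, b; 0, 0, 1]}
  one_mem' := ⟨0, 0, 0, by simp [Matrix.one_fin_three]⟩
  mul_mem' := by
    rintro M N ⟨a, b, c, hM⟩ ⟨a', b', c', hN⟩
    refine ⟨a + a', b + b', c + c' + a * b', ?_⟩
    rw [Units.val_mul, hM, hN, Matrix.mul_fin_three]
    congr 1 <;> ring
  inv_mem' := by
    rintro M ⟨a, b, c, hM⟩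
    refine ⟨-a, -b, -c + a * b, ?_⟩
    have h : (M : Matrix (Fin 3) (Fin 3) R) *
        !![1, -a, -c + a * b; 0, 1, -b; 0, 0, 1] = 1 := by
      rw [hM, Matrix.mul_fin_three, Matrix.one_fin_three]
      congr 1 <;> ring
    calc (↑M⁻¹ : Matrix (Fin 3) (Fin 3) R)
        = ↑M⁻¹ * ((M : Matrix (Fin 3) (Fin 3) R) *
            !![1, -a, -c + a * b; 0, 1, -b; 0, 0, 1]) := by rw [h, mul_one]
      _ = !![1, -a, -c + a * b; 0, 1, -b; 0, 0, 1] := by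
            rw [← mul_assoc, Units.inv_mul, one_mul]

/-!
Sending `inl a` and `inr b` to the elementary matrices with entries `a` at `(0,1)` and `b` at
`(1,2)` defines a homomorphism `Nil2 → Heis`, because commutators in the Heisenberg group are
central. In the second nilpotent product the commutators `⁅inl a, inr b⁆` are central, hence
bimultiplicative; since every element of `ℤ/nℤ` is an integer multiple of `1`, this gives
`⁅inl a, inr b⁆ = ⁅inl (a * b), inr 1⁆`. So the words `inr b * inl a * ⁅inl c, inr 1⁆`, which map
to the matrices with entries `a, b, c`, are closed under left multiplication by the generators:
they exhaust the group, and the homomorphism is a bijection.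
-/

open Multiplicative

section CentralCommutator

variable {G : Type*} [Group G]

theorem commutatorElement_mul_left_of_mem_center {a b c : G}
    (h : ⁅b, c⁆ ∈ Subgroup.center G) : ⁅a * b, c⁆ = ⁅a, c⁆ * ⁅b, c⁆ := by
  rw [commutatorElement_mul_left_eq_conj_mul, Subgroup.mem_center_iff.mp h a, mul_inv_cancel_right,
    Subgroup.mem_center_iff.mp h]

theorem commutatorElement_mul_right_of_mem_center {a b c : G}
    (h : ⁅a, c⁆ ∈ Subgroup.center G) : ⁅a, b * c⁆ = ⁅a, b⁆ * ⁅a, c⁆ := by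
  rw [commutatorElement_mul_right_eq_mul_conj, mul_assoc _ b, Subgroup.mem_center_iff.mp h b,
    mul_assoc, mul_inv_cancel_right]

theorem mul_eq_commutatorElement_mul (a b : G) : a * b = ⁅a, b⁆ * (b * a) := by
  simp [commutatorElement_def, mul_assoc]

end CentralCommutator

namespace Nil2

variable {A B : Type*} [Group A] [Group B]

def mk : Coprod A B →* Nil2 A B := QuotientGroup.mk' _

theorem mk_surjective : Function.Surjective (mk : Coprod A B → Nil2 A B) :=
  QuotientGroup.mk'_surjective _

theorem commutatorElement_inl_inr_mem_center (a : A) (b : B) :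
    ⁅(inl a : Nil2 A B), inr b⁆ ∈ Subgroup.center (Nil2 A B) := by
  rw [Subgroup.mem_center_iff]
  intro x
  obtain ⟨w, rfl⟩ := mk_surjective x
  rw [← commutatorElement_eq_one_iff_mul_comm]
  exact (QuotientGroup.eq_one_iff _).mpr (Subgroup.subset_normalClosure ⟨w, a, b, rfl⟩)

variable (B) in
def commutatorInrHom (b : B) : A →* Nil2 A B where
  toFun a := ⁅inl a, inr b⁆
  map_one' := by simp only [map_one]; exact commutatorElement_one_left _
  map_mul' _ _ := by
    simp only [map_mul]
    exact commutatorElement_mul_left_of_mem_center (commutatorElement_inl_inr_mem_center _ _)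

variable (A) in
def commutatorInlHom (a : A) : B →* Nil2 A B where
  toFun b := ⁅inl a, inr b⁆
  map_one' := by simp only [map_one]; exact commutatorElement_one_right _
  map_mul' _ _ := by
    simp only [map_mul]
    exact commutatorElement_mul_right_of_mem_center (commutatorElement_inl_inr_mem_center _ _)

theorem commutatorElement_inl_zpow_inr (a : A) (b : B) (k : ℤ) :
    ⁅(inl (a ^ k) : Nil2 A B), (inr b : Nil2 A B)⁆ = ⁅(inl a : Nil2 A B), (inr b : Nil2 A B)⁆ ^ k :=
  map_zpow (commutatorInrHom B b) a k

theorem commutatorElement_inl_inr_zpow (a : A) (b : B) (k : ℤ) :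
    ⁅(inl a : Nil2 A B), (inr (b ^ k) : Nil2 A B)⁆ = ⁅(inl a : Nil2 A B), (inr b : Nil2 A B)⁆ ^ k :=
  map_zpow (commutatorInlHom A a) b k

section Lift

variable {G : Type*} [Group G]

def lift (f : A →* G) (g : B →* G) (h : ∀ a b, ⁅f a, g b⁆ ∈ Subgroup.center G) :
    Nil2 A B →* G :=
  QuotientGroup.lift _ (Coprod.lift f g) <| Subgroup.normalClosure_le_normal <| by
    rintro _ ⟨x, a, b, rfl⟩
    rw [SetLike.mem_coe, MonoidHom.mem_ker, map_commutatorElement, map_commutatorElement,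
      Coprod.lift_apply_inl, Coprod.lift_apply_inr, commutatorElement_eq_one_iff_mul_comm]
    exact Subgroup.mem_center_iff.mp (h a b) _

end Lift

end Nil2

namespace Heis

variable {R : Type*} [CommRing R]

theorem unitriangular_mul (a b c a' b' c' : R) :
    !![1, a, c; 0, 1, b; 0, 0, 1] * !![1, a', c'; 0, 1, b'; 0, 0, 1] =
      !![1, a + a', c + c' + a * b'; 0, 1, b + b'; 0, 0, 1] := by
  rw [Matrix.mul_fin_three]
  simp only [mul_one, mul_zero, add_zero, zero_add, one_mul, zero_mul]
  ring_nf

theorem unitriangular_eq_one {a b c : R} (ha : a = 0) (hb : b = 0) (hc : c = 0) :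
    !![1, a, c; 0, 1, b; 0, 0, 1] = 1 := by
  subst ha hb hc
  exact Matrix.one_fin_three.symm

def mk (a b c : R) : Heis R :=
  ⟨⟨!![1, a, c; 0, 1, b; 0, 0, 1], !![1, -a, a * b - c; 0, 1, -b; 0, 0, 1],
    by rw [unitriangular_mul]; exact unitriangular_eq_one (by ring) (by ring) (by ring),
    by rw [unitriangular_mul]; exact unitriangular_eq_one (by ring) (by ring) (by ring)⟩,
    a, b, c, rfl⟩

theorem mk_mul (a b c a' b' c' : R) :
    mk a b c * mk a' b' c' = mk (a + a') (b + b') (c + c' + a * b') :=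
  Subtype.ext <| Units.ext <| unitriangular_mul a b c a' b' c'

theorem mk_zero : mk (0 : R) 0 0 = 1 :=
  Subtype.ext <| Units.ext <| unitriangular_eq_one rfl rfl rfl

theorem mk_inj {a b c a' b' c' : R} : mk a b c = mk a' b' c' ↔ a = a' ∧ b = b' ∧ c = c' := by
  refine ⟨fun h ↦ ?_, by rintro ⟨rfl, rfl, rfl⟩; rfl⟩
  have h := congrArg
    (fun M : Heis R ↦ ((M : (Matrix (Fin 3) (Fin 3) R)ˣ) : Matrix (Fin 3) (Fin 3) R)) h
  exact ⟨by simpa [mk] using congrFun₂ h 0 1, by simpa [mk] using congrFun₂ h 1 2,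
    by simpa [mk] using congrFun₂ h 0 2⟩

theorem mk_inv (a b c : R) : (mk a b c)⁻¹ = mk (-a) (-b) (a * b - c) := by
  rw [inv_eq_iff_mul_eq_one, mk_mul, ← mk_zero, mk_inj]
  exact ⟨by ring, by ring, by ring⟩

theorem exists_eq_mk (M : Heis R) : ∃ a b c, M = mk a b c := by
  obtain ⟨u, a, b, c, hu⟩ := M
  exact ⟨a, b, c, Subtype.ext (Units.ext hu)⟩

theorem commutatorElement_mk (a b : R) : ⁅mk a 0 0, mk 0 b 0⁆ = mk 0 0 (a * b) := by
  rw [commutatorElement_def, mk_inv, mk_inv, mk_mul, mk_mul, mk_mul, mk_inj]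
  exact ⟨by ring, by ring, by ring⟩

theorem mk_zero_zero_mem_center (c : R) : mk 0 0 c ∈ Subgroup.center (Heis R) := by
  refine Subgroup.mem_center_iff.mpr fun M ↦ ?_
  obtain ⟨a, b, c', rfl⟩ := exists_eq_mk M
  rw [mk_mul, mk_mul, mk_inj]
  exact ⟨by ring, by ring, by ring⟩

def inlHom : Multiplicative R →* Heis R where
  toFun a := mk a.toAdd 0 0
  map_one' := mk_zero
  map_mul' a a' := by rw [mk_mul, mk_inj]; simp

def inrHom : Multiplicative R →* Heis R where
  toFun b := mk 0 b.toAdd 0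
  map_one' := mk_zero
  map_mul' b b' := by rw [mk_mul, mk_inj]; simp

theorem inlHom_apply (a : Multiplicative R) : inlHom a = mk a.toAdd 0 0 := rfl

theorem inrHom_apply (b : Multiplicative R) : inrHom b = mk 0 b.toAdd 0 := rfl

def ofNil2 : Nil2 (Multiplicative R) (Multiplicative R) →* Heis R :=
  Nil2.lift inlHom inrHom fun a b ↦ by
    rw [inlHom_apply, inrHom_apply, commutatorElement_mk]
    exact mk_zero_zero_mem_center _

theorem ofNil2_inl (a : Multiplicative R) : ofNil2 (Nil2.inl a) = mk a.toAdd 0 0 := rfl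

theorem ofNil2_inr (b : Multiplicative R) : ofNil2 (Nil2.inr b) = mk 0 b.toAdd 0 := rfl

end Heis

namespace Nil2

variable {R : Type*} [CommRing R]

local notation "N" => Nil2 (Multiplicative R) (Multiplicative R)

def heisWord (a b c : R) : N :=
  inr (ofAdd b) * inl (ofAdd a) * ⁅(inl (ofAdd c) : N), (inr (ofAdd 1) : N)⁆

theorem commutatorElement_inl_inr_intCast (a : R) (k : ℤ) :
    ⁅(inl (ofAdd a) : N), (inr (ofAdd (k : R)) : N)⁆ =
      ⁅(inl (ofAdd (a * k)) : N), (inr (ofAdd 1) : N)⁆ := by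
  have hb : ofAdd (k : R) = ofAdd 1 ^ k := by rw [← ofAdd_zsmul, zsmul_one]
  have ha : ofAdd (a * k) = ofAdd a ^ k := by rw [← ofAdd_zsmul, zsmul_eq_mul, mul_comm]
  rw [hb, ha, commutatorElement_inl_inr_zpow, commutatorElement_inl_zpow_inr]

theorem heisWord_zero : heisWord (0 : R) 0 0 = 1 := by
  simp [heisWord]

theorem inr_mul_heisWord (a b c b' : R) :
    (inr (ofAdd b') : N) * heisWord a b c = heisWord a (b' + b) c := by
  rw [heisWord, heisWord, ← mul_assoc, ← mul_assoc, ← map_mul, ofAdd_add]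

theorem inl_mul_heisWord_intCast (a c a' : R) (k : ℤ) :
    (inl (ofAdd a') : N) * heisWord a k c = heisWord (a' + a) k (c + a' * k) := by
  let z (c : R) : N := ⁅(inl (ofAdd c) : N), (inr (ofAdd 1) : N)⁆
  have z_add (c d : R) : z (c + d) = z c * z d :=
    map_mul (commutatorInrHom (Multiplicative R) (ofAdd 1)) (ofAdd c) (ofAdd d)
  have inl_mul_inr : (inl (ofAdd a') : N) * inr (ofAdd (k : R)) =
      z (a' * k) * (inr (ofAdd (k : R)) * inl (ofAdd a')) := by
    rw [mul_eq_commutatorElement_mul, commutatorElement_inl_inr_intCast]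
  calc (inl (ofAdd a') : N) * heisWord a k c
      = (inl (ofAdd a') * inr (ofAdd (k : R))) * inl (ofAdd a) * z c := by
        simp only [heisWord, z, mul_assoc]
    _ = z (a' * k) * (inr (ofAdd (k : R)) * inl (ofAdd a') * inl (ofAdd a) * z c) := by
        rw [inl_mul_inr]; simp only [mul_assoc]
    _ = inr (ofAdd (k : R)) * inl (ofAdd a') * inl (ofAdd a) * z c * z (a' * k) :=
        (Subgroup.mem_center_iff.mp (commutatorElement_inl_inr_mem_center _ _) _).symm
    _ = heisWord (a' + a) k (c + a' * k) := by
        rw [mul_assoc _ (z c), ← z_add, mul_assoc (inr _), ← map_mul, ← ofAdd_add]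
        rfl

theorem exists_eq_heisWord (hR : Function.Surjective (Int.cast : ℤ → R)) (x : N) :
    ∃ a b c : R, x = heisWord a b c := by
  obtain ⟨w, rfl⟩ := mk_surjective x
  induction w using Coprod.induction_on' with
  | one => exact ⟨0, 0, 0, (map_one mk).trans heisWord_zero.symm⟩
  | inl_mul a' w ih =>
    obtain ⟨a, b, c, hw⟩ := ih
    obtain ⟨k, rfl⟩ := hR b
    exact ⟨_, _, _, (map_mul mk _ _).trans (hw ▸ inl_mul_heisWord_intCast a c a'.toAdd k)⟩
  | inr_mul b' w ih =>
    obtain ⟨a, b, c, hw⟩ := ih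
    exact ⟨_, _, _, (map_mul mk _ _).trans (hw ▸ inr_mul_heisWord a b c b'.toAdd)⟩

end Nil2

namespace Heis

variable {R : Type*} [CommRing R]

theorem ofNil2_heisWord (a b c : R) : ofNil2 (Nil2.heisWord a b c) = mk a b c := by
  rw [Nil2.heisWord, map_mul, map_mul, map_commutatorElement, ofNil2_inl, ofNil2_inl, ofNil2_inr,
    ofNil2_inr, commutatorElement_mk, mk_mul, mk_mul, mk_inj]
  simp

theorem ofNil2_bijective (hR : Function.Surjective (Int.cast : ℤ → R)) :
    Function.Bijective (ofNil2 : Nil2 (Multiplicative R) (Multiplicative R) →* Heis R) := by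
  refine ⟨fun x y hxy ↦ ?_, fun M ↦ ?_⟩
  · obtain ⟨a, b, c, rfl⟩ := Nil2.exists_eq_heisWord hR x
    obtain ⟨a', b', c', rfl⟩ := Nil2.exists_eq_heisWord hR y
    obtain ⟨rfl, rfl, rfl⟩ := mk_inj.mp <| by simpa only [ofNil2_heisWord] using hxy
    rfl
  · obtain ⟨a, b, c, rfl⟩ := exists_eq_mk M
    exact ⟨_, ofNil2_heisWord a b c⟩

end Heis

theorem stmt14_general (n : ℕ) :
    Nonempty (Nil2 (Multiplicative (ZMod n)) (Multiplicative (ZMod n)) ≃*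
      Heis (ZMod n)) :=
  ⟨MulEquiv.ofBijective _ (Heis.ofNil2_bijective ZMod.intCast_surjective)⟩

/-- For `n ≥ 1`, `(ℤ/nℤ) *₂ (ℤ/nℤ)` is isomorphic to the Heisenberg group of upper
unitriangular `3 × 3` matrices over `ℤ/nℤ`. -/
theorem stmt14 (n : ℕ) (hn : 1 ≤ n) :
    Nonempty (Nil2 (Multiplicative (ZMod n)) (Multiplicative (ZMod n)) ≃*
      Heis (ZMod n)) :=
  stmt14_general n
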